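/- Let A be a 2n×2n real positive definite matrix with ordinary eigenvalues λ₁(A) ≤ λ₂(A) ≤ … and symplectic eigenvalues ν₁(A) ≤ … ≤ νₙ(A). Then ν₁(A)² ≥ λ₁(A)·λ₂(A). In particular, if λ₁(A)λ₂(A) ≥ 1 then A + iΩ ≥ 0, i.e., A is a valid quantum covariance matrix. -/

import Mathlib

open Matrix
open scoped ComplexOrder

/-- Total matrix square root: the PSD square root on PSD matrices, `0` elsewhere. -/
noncomputable def msqrt {𝕜 : Type*} [RCLike 𝕜] {n : Type*} [Fintype n] [DecidableEq n]
    (A : Matrix n n 𝕜) : Matrix n n 𝕜 :=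
  letI := Classical.dec A.PosSemidef
  if h : A.PosSemidef then (h.1.eigenvectorUnitary : Matrix n n 𝕜) *
      diagonal ((↑) ∘ Real.sqrt ∘ h.1.eigenvalues) * star (h.1.eigenvectorUnitary : Matrix n n 𝕜)
    else 0

/-- The matrix geometric mean `A # B = A^{1/2} (A^{-1/2} B A^{-1/2})^{1/2} A^{1/2}`. -/
noncomputable def geomMean {𝕜 : Type*} [RCLike 𝕜] {n : Type*} [Fintype n] [DecidableEq n]
    (A B : Matrix n n 𝕜) : Matrix n n 𝕜 :=
  msqrt A * msqrt ((msqrt A)⁻¹ * B * (msqrt A)⁻¹) * msqrt A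

/-- The standard symplectic form `Ω = [[0, I],[-I, 0]]` in position-momentum ordering. -/
def symForm (n : ℕ) : Matrix (Fin n ⊕ Fin n) (Fin n ⊕ Fin n) ℝ :=
  Matrix.fromBlocks 0 1 (-1) 0

/-!
Fix `i` and let `p`, `q` be the rows of `S` at the `i`-th position and momentum coordinates.
The Williamson normal form says `pᵀAp = qᵀAq = νᵢ`, `pᵀAq = 0` and `pᵀΩq = 1`, so `νᵢ²` is the
Gram determinant of `p, q` with respect to `A`. Diagonalizing `A`, Lagrange's identity bounds it
below by `λ₁λ₂` times the Euclidean Gram determinant `|p|²|q|² - (p·q)²`; as `Ωᵀp` is orthogonal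
to `p` and of the same length, Bessel's inequality bounds the latter below by `(pᵀΩq)² = 1`.

For the second claim, `νᵢ ≥ 1` makes `diag(ν, ν) + iΩ = (diag(ν, ν) - 1) + (1 + iΩ)` positive
semidefinite, the second summand being Hermitian with `(1 + iΩ)² = 2(1 + iΩ)`; congruence by the
invertible `S` transports this to `A + iΩ`.
-/

lemma Monotone.mul_le_mul_of_ne {R : Type*} [CommSemiring R] [PartialOrder R] [IsOrderedRing R]
    {k : ℕ} {f : Fin k → R} (hf : Monotone f) (h1 : 1 < k) (h0 : 0 ≤ f ⟨0, by omega⟩)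
    {a b : Fin k} (hab : a ≠ b) : f ⟨0, by omega⟩ * f ⟨1, h1⟩ ≤ f a * f b := by
  wlog hlt : a < b generalizing a b
  · rw [mul_comm (f a)]
    exact this hab.symm (lt_of_le_of_ne (not_lt.mp hlt) hab.symm)
  have ha : f ⟨0, by omega⟩ ≤ f a := hf (Fin.mk_le_of_le_val (Nat.zero_le _))
  have hb : f ⟨1, h1⟩ ≤ f b := hf (Fin.mk_le_of_le_val (by rw [Fin.lt_def] at hlt; omega))
  exact mul_le_mul ha hb (h0.trans (hf (Fin.mk_le_mk.mpr zero_le_one))) (h0.trans ha)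

lemma symForm_eq_neg_J (n : ℕ) : symForm n = -J (Fin n) ℝ := by
  rw [symForm, J, fromBlocks_neg]
  simp

lemma symForm_transpose (n : ℕ) : (symForm n)ᵀ = -symForm n := by
  rw [symForm_eq_neg_J, transpose_neg, J_transpose]

lemma symForm_mul_symForm (n : ℕ) : symForm n * symForm n = -1 := by
  rw [symForm_eq_neg_J, neg_mul_neg, J_squared]

lemma mem_symplecticGroup_iff_symForm {n : ℕ} {S : Matrix (Fin n ⊕ Fin n) (Fin n ⊕ Fin n) ℝ} :
    S ∈ symplecticGroup (Fin n) ℝ ↔ S * symForm n * Sᵀ = symForm n := by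
  rw [SymplecticGroup.mem_iff, symForm_eq_neg_J, mul_neg, neg_mul, neg_inj]

namespace Matrix

variable {m : Type*} [Fintype m]

def gramDet (B : Matrix m m ℝ) (p q : m → ℝ) : ℝ :=
  (p ⬝ᵥ B *ᵥ p) * (q ⬝ᵥ B *ᵥ q) - (p ⬝ᵥ B *ᵥ q) ^ 2

lemma dotProduct_mul_mul_transpose_mulVec {k : Type*} [Fintype k] (M : Matrix m k ℝ)
    (B : Matrix k k ℝ) (p q : m → ℝ) :
    p ⬝ᵥ (M * B * Mᵀ) *ᵥ q = (Mᵀ *ᵥ p) ⬝ᵥ B *ᵥ (Mᵀ *ᵥ q) := by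
  rw [← mulVec_mulVec, ← mulVec_mulVec, dotProduct_mulVec p M, ← mulVec_transpose]

lemma gramDet_mul_mul_transpose {k : Type*} [Fintype k] (M : Matrix m k ℝ) (B : Matrix k k ℝ)
    (p q : m → ℝ) : gramDet (M * B * Mᵀ) p q = gramDet B (Mᵀ *ᵥ p) (Mᵀ *ᵥ q) := by
  simp only [gramDet, dotProduct_mul_mul_transpose_mulVec]

omit [Fintype m] in
lemma mul_mul_transpose_apply {k : Type*} [Fintype k] (M : Matrix m k ℝ) (B : Matrix k k ℝ)
    (i j : m) : (M * B * Mᵀ) i j = M i ⬝ᵥ B *ᵥ M j := by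
  rw [mul_apply', mul_apply_eq_vecMul, ← dotProduct_mulVec]
  rfl

lemma two_mul_gramDet_diagonal [DecidableEq m] (d p q : m → ℝ) :
    2 * gramDet (diagonal d) p q = ∑ i, ∑ j, d i * d j * (p i * q j - p j * q i) ^ 2 := by
  have h : ∀ i j, d i * d j * (p i * q j - p j * q i) ^ 2
      = (d i * (p i * p i)) * (d j * (q j * q j)) + (d j * (p j * p j)) * (d i * (q i * q i))
        - 2 * ((d i * (p i * q i)) * (d j * (p j * q j))) := fun _ _ => by ring
  simp_rw [h, Finset.sum_sub_distrib, Finset.sum_add_distrib, ← Finset.sum_mul, ← Finset.mul_sum,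
    ← Finset.sum_mul]
  have hdiag : ∀ u v : m → ℝ, u ⬝ᵥ diagonal d *ᵥ v = ∑ i, d i * (u i * v i) := fun u v =>
    Finset.sum_congr rfl fun i _ => by rw [mulVec_diagonal]; ring
  rw [gramDet, hdiag, hdiag, hdiag]
  ring

lemma mul_gramDet_one_le_gramDet_diagonal [DecidableEq m] {c : ℝ} {d : m → ℝ}
    (hd : ∀ i j, i ≠ j → c ≤ d i * d j) (p q : m → ℝ) :
    c * gramDet 1 p q ≤ gramDet (diagonal d) p q := by
  have hone : 2 * (c * gramDet 1 p q) = ∑ i, ∑ j, c * (p i * q j - p j * q i) ^ 2 := by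
    rw [mul_left_comm, ← diagonal_one, two_mul_gramDet_diagonal, Finset.mul_sum]
    simp_rw [Finset.mul_sum, one_mul]
  suffices 2 * (c * gramDet 1 p q) ≤ 2 * gramDet (diagonal d) p q by linarith
  rw [hone, two_mul_gramDet_diagonal]
  refine Finset.sum_le_sum fun i _ => Finset.sum_le_sum fun j _ => ?_
  rcases eq_or_ne i j with rfl | hij
  · simp
  · exact mul_le_mul_of_nonneg_right (hd i j hij) (sq_nonneg _)

lemma sq_dotProduct_le (v q : m → ℝ) : (v ⬝ᵥ q) ^ 2 ≤ (v ⬝ᵥ v) * (q ⬝ᵥ q) := by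
  simpa only [dotProduct, sq] using Finset.sum_mul_sq_le_sq_mul_sq Finset.univ v q

lemma sq_add_sq_dotProduct_le {p w : m → ℝ} (hpw : p ⬝ᵥ w = 0) (hww : w ⬝ᵥ w = p ⬝ᵥ p)
    (q : m → ℝ) : (p ⬝ᵥ q) ^ 2 + (w ⬝ᵥ q) ^ 2 ≤ (p ⬝ᵥ p) * (q ⬝ᵥ q) := by
  set a := p ⬝ᵥ q
  set b := w ⬝ᵥ q
  have hcs := sq_dotProduct_le (a • p + b • w) q
  have hvq : (a • p + b • w) ⬝ᵥ q = a ^ 2 + b ^ 2 := by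
    simp only [add_dotProduct, smul_dotProduct, smul_eq_mul]; ring
  have hvv : (a • p + b • w) ⬝ᵥ (a • p + b • w) = (a ^ 2 + b ^ 2) * (p ⬝ᵥ p) := by
    simp only [add_dotProduct, dotProduct_add, smul_dotProduct, dotProduct_smul, smul_eq_mul,
      dotProduct_comm w p, hpw, hww]
    ring
  rw [hvq, hvv] at hcs
  have hq : 0 ≤ q ⬝ᵥ q := Finset.sum_nonneg fun i _ => mul_self_nonneg (q i)
  have hp : 0 ≤ p ⬝ᵥ p := Finset.sum_nonneg fun i _ => mul_self_nonneg (p i)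
  nlinarith [sq_nonneg a, sq_nonneg b, mul_nonneg hp hq]

lemma IsHermitian.mul_gramDet_one_le [DecidableEq m] {A : Matrix m m ℝ} (hA : A.IsHermitian)
    {c : ℝ} (hc : ∀ i j, i ≠ j → c ≤ hA.eigenvalues i * hA.eigenvalues j) (p q : m → ℝ) :
    c * gramDet 1 p q ≤ gramDet A p q := by
  set U : Matrix m m ℝ := ↑hA.eigenvectorUnitary
  have hA_eq : A = U * diagonal hA.eigenvalues * Uᵀ := by
    simpa [Unitary.conjStarAlgAut_apply, star_eq_conjTranspose] using hA.spectral_theorem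
  have hU : (1 : Matrix m m ℝ) = U * 1 * Uᵀ := by
    simpa [star_eq_conjTranspose] using (Unitary.mul_star_self_of_mem hA.eigenvectorUnitary.2).symm
  rw [hA_eq, gramDet_mul_mul_transpose]
  nth_rewrite 1 [hU]
  rw [gramDet_mul_mul_transpose]
  exact mul_gramDet_one_le_gramDet_diagonal hc _ _

lemma posSemidef_one_add_I_smul [DecidableEq m] {J : Matrix m m ℂ} (hJ : Jᴴ = -J)
    (hJJ : J * J = -1) :
    (1 + Complex.I • J).PosSemidef := by
  have hsq : (1 + Complex.I • J) * (1 + Complex.I • J)ᴴ = (2 : ℝ) • (1 + Complex.I • J) := by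
    rw [conjTranspose_add, conjTranspose_smul, conjTranspose_one, hJ]
    simp only [add_mul, mul_add, one_mul, mul_one, smul_mul_smul_comm, Complex.star_def,
      Complex.conj_I, neg_neg, Complex.I_mul_I, hJJ, neg_smul, smul_neg, one_smul]
    rw [two_smul]
    abel
  have h := (posSemidef_self_mul_conjTranspose (1 + Complex.I • J)).smul (a := (2⁻¹ : ℝ))
    (by norm_num)
  rwa [hsq, smul_smul, inv_mul_cancel₀ two_ne_zero, one_smul] at h

lemma posSemidef_diagonal_add_I_smul [DecidableEq m] {d : m → ℝ} (hd : ∀ i, 1 ≤ d i)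
    {J : Matrix m m ℂ} (hJ : Jᴴ = -J) (hJJ : J * J = -1) :
    (diagonal (fun i => (d i : ℂ)) + Complex.I • J).PosSemidef := by
  have hdiag : (diagonal fun i => ((d i - 1 : ℝ) : ℂ)).PosSemidef :=
    posSemidef_diagonal_iff.mpr fun i => Complex.zero_le_real.mpr (sub_nonneg.mpr (hd i))
  convert hdiag.add (posSemidef_one_add_I_smul hJ hJJ) using 1
  rw [← add_assoc, ← diagonal_one, diagonal_add]
  simp

end Matrix

lemma sq_dotProduct_symForm_mulVec_le_gramDet_one {n : ℕ} (p q : Fin n ⊕ Fin n → ℝ) :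
    (p ⬝ᵥ symForm n *ᵥ q) ^ 2 ≤ gramDet 1 p q := by
  have hwq : ∀ v, ((symForm n)ᵀ *ᵥ p) ⬝ᵥ v = p ⬝ᵥ symForm n *ᵥ v := fun v => by
    rw [dotProduct_mulVec, mulVec_transpose]
  have hpw : p ⬝ᵥ (symForm n)ᵀ *ᵥ p = 0 := by
    have h := dotProduct_comm p ((symForm n)ᵀ *ᵥ p)
    rw [hwq] at h
    rw [symForm_transpose, neg_mulVec, dotProduct_neg] at h ⊢
    linarith
  have hww : ((symForm n)ᵀ *ᵥ p) ⬝ᵥ (symForm n)ᵀ *ᵥ p = p ⬝ᵥ p := by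
    rw [hwq, mulVec_mulVec, symForm_transpose, mul_neg, symForm_mul_symForm, neg_neg, one_mulVec]
  have h := sq_add_sq_dotProduct_le hpw hww q
  rw [hwq] at h
  simp only [gramDet, one_mulVec]
  linarith

section Complexification

variable {l m k : Type*} [Fintype m]

lemma map_ofReal_mul (X : Matrix l m ℝ) (Y : Matrix m k ℝ) :
    (X * Y).map Complex.ofReal = X.map Complex.ofReal * Y.map Complex.ofReal :=
  Matrix.map_mul (f := Complex.ofRealHom)

omit [Fintype m] in
lemma conjTranspose_map_ofReal (X : Matrix m k ℝ) :
    (X.map Complex.ofReal)ᴴ = Xᵀ.map Complex.ofReal := by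
  ext; simp

end Complexification

section Williamson

variable {n : ℕ} {A S : Matrix (Fin n ⊕ Fin n) (Fin n ⊕ Fin n) ℝ} {ν : Fin n → ℝ}

lemma gramDet_rows_eq_sq_of_williamson (hW : S * A * Sᵀ = diagonal (Sum.elim ν ν)) (i : Fin n) :
    gramDet A (S (.inl i)) (S (.inr i)) = ν i ^ 2 := by
  simp only [gramDet, ← mul_mul_transpose_apply, hW]
  simp [sq]

lemma dotProduct_rows_symForm_mulVec_eq_one (hS : S * symForm n * Sᵀ = symForm n) (i : Fin n) :
    S (.inl i) ⬝ᵥ symForm n *ᵥ S (.inr i) = 1 := by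
  rw [← mul_mul_transpose_apply, hS]
  simp [symForm]

lemma le_sq_of_williamson (hA : A.IsHermitian) {c : ℝ} (hc0 : 0 ≤ c)
    (hc : ∀ i j, i ≠ j → c ≤ hA.eigenvalues i * hA.eigenvalues j)
    (hS : S * symForm n * Sᵀ = symForm n) (hW : S * A * Sᵀ = diagonal (Sum.elim ν ν))
    (i : Fin n) : c ≤ ν i ^ 2 := by
  have hgram : 1 ≤ gramDet 1 (S (.inl i)) (S (.inr i)) := by
    simpa [dotProduct_rows_symForm_mulVec_eq_one hS] using
      sq_dotProduct_symForm_mulVec_le_gramDet_one (S (.inl i)) (S (.inr i))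
  calc c = c * 1 := (mul_one c).symm
    _ ≤ c * gramDet 1 (S (.inl i)) (S (.inr i)) := mul_le_mul_of_nonneg_left hgram hc0
    _ ≤ gramDet A (S (.inl i)) (S (.inr i)) := hA.mul_gramDet_one_le hc _ _
    _ = ν i ^ 2 := gramDet_rows_eq_sq_of_williamson hW i

lemma pos_of_williamson (hA : A.PosDef) (hS : S * symForm n * Sᵀ = symForm n)
    (hW : S * A * Sᵀ = diagonal (Sum.elim ν ν)) (i : Fin n) : 0 < ν i := by
  have hrow : S (.inl i) ≠ 0 := fun h => by
    simpa [h] using dotProduct_rows_symForm_mulVec_eq_one hS i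
  have h := congrFun (congrFun hW (.inl i)) (.inl i)
  rw [mul_mul_transpose_apply] at h
  simpa [h] using hA.dotProduct_mulVec_pos hrow

lemma posSemidef_add_I_smul_symForm_of_williamson (hS : S * symForm n * Sᵀ = symForm n)
    (hW : S * A * Sᵀ = diagonal (Sum.elim ν ν)) (hν : ∀ i, 1 ≤ ν i) :
    (A.map Complex.ofReal + Complex.I • (symForm n).map Complex.ofReal).PosSemidef := by
  have hU : IsUnit (S.map Complex.ofReal) := (isUnit_iff_isUnit_det _).mpr <|
    SymplecticGroup.symplectic_det
      (SymplecticGroup.map_mem (mem_symplecticGroup_iff_symForm.mpr hS) Complex.ofRealHom)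
  have hconj : ∀ X : Matrix (Fin n ⊕ Fin n) (Fin n ⊕ Fin n) ℝ,
      S.map Complex.ofReal * X.map Complex.ofReal * star (S.map Complex.ofReal)
        = (S * X * Sᵀ).map Complex.ofReal := fun X => by
    rw [star_eq_conjTranspose, conjTranspose_map_ofReal, map_ofReal_mul, map_ofReal_mul]
  rw [← hU.posSemidef_star_right_conjugate_iff, mul_add, add_mul, Matrix.mul_smul,
    Matrix.smul_mul, hconj, hconj, hW, hS, diagonal_map (by simp)]
  refine posSemidef_diagonal_add_I_smul (Sum.forall.mpr ⟨hν, hν⟩) ?_ ?_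
  · rw [conjTranspose_map_ofReal, symForm_transpose, Matrix.map_neg _ Complex.ofReal_neg]
  · rw [← map_ofReal_mul, symForm_mul_symForm, Matrix.map_neg _ Complex.ofReal_neg,
      Matrix.map_one _ Complex.ofReal_zero Complex.ofReal_one]

end Williamson

/-- The smallest symplectic eigenvalue squared dominates the product of the two smallest
ordinary eigenvalues: `ν₁(A)² ≥ λ₁(A) λ₂(A)`. In particular `λ₁ λ₂ ≥ 1` implies `A + iΩ ≥ 0`. -/
theorem sympl_eig_sq_ge_prod_smallest_eigs (n : ℕ) (hn : 0 < n)
    (A : Matrix (Fin n ⊕ Fin n) (Fin n ⊕ Fin n) ℝ) (hA : A.PosDef)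
    (S : Matrix (Fin n ⊕ Fin n) (Fin n ⊕ Fin n) ℝ) (ν : Fin n → ℝ)
    (hS : S * symForm n * Sᵀ = symForm n)
    (hW : S * A * Sᵀ = Matrix.diagonal (Sum.elim ν ν))
    (lam : Fin (n + n) → ℝ) (hmono : Monotone lam)
    (e : Fin (n + n) ≃ (Fin n ⊕ Fin n))
    (hlam : ∀ i, lam i = hA.1.eigenvalues (e i)) :
    lam ⟨0, by omega⟩ * lam ⟨1, by omega⟩ ≤ (⨅ i, ν i) ^ 2 ∧
      (1 ≤ lam ⟨0, by omega⟩ * lam ⟨1, by omega⟩ →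
        (A.map Complex.ofReal + Complex.I • (symForm n).map Complex.ofReal).PosSemidef) := by
  have hpos : ∀ k, 0 < lam k := fun k => (hlam k).symm ▸ hA.eigenvalues_pos (e k)
  have hc0 : 0 ≤ lam ⟨0, by omega⟩ * lam ⟨1, by omega⟩ := (mul_pos (hpos _) (hpos _)).le
  have hev : ∀ i j, i ≠ j →
      lam ⟨0, by omega⟩ * lam ⟨1, by omega⟩ ≤ hA.1.eigenvalues i * hA.1.eigenvalues j :=
    fun i j hij => by
      simpa only [hlam, Equiv.apply_symm_apply] using
        hmono.mul_le_mul_of_ne (by omega) (hpos _).le (e.symm.injective.ne hij)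
  have hν := le_sq_of_williamson hA.1 hc0 hev hS hW
  have : Nonempty (Fin n) := ⟨⟨0, hn⟩⟩
  obtain ⟨i₀, hi₀⟩ := exists_eq_ciInf_of_finite (f := ν)
  refine ⟨hi₀ ▸ hν i₀, fun h1 => posSemidef_add_I_smul_symForm_of_williamson hS hW fun i => ?_⟩
  nlinarith [hν i, pos_of_williamson hA hS hW i]
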